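/- For any tuple (n_1,...,n_k) in Z_k (admissible nonnegative tuple with [n_1,...,n_k] = 0) with all entries positive and k ≥ 2, the height satisfies hgt(n) = |n| - 2(k-1), where |n| = n_1 + ... + n_k. -/

import Mathlib

/-- Hirzebruch–Jung continued fraction `[n₁,…,n_k] = n₁ - 1/(n₂ - 1/(⋯ - 1/n_k))`,
evaluated from the right (with the convention `(0 : ℚ)⁻¹ = 0`, so `hjcf [n] = n`). -/
def hjcf : List ℤ → ℚ
  | [] => 0
  | a :: l => (a : ℚ) - (hjcf l)⁻¹

/-- A tuple is admissible if all intermediate denominators `[n_j,…,n_k]` (for `j ≥ 2`)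
are positive. -/
def Admissible (l : List ℤ) : Prop :=
  ∀ j : ℕ, 1 ≤ j → j < l.length → 0 < hjcf (l.drop j)

/-- Strict blowup at the `j`-th term (1-indexed): for `j ≤ r-1` it maps
`(n₁,…,n_r)` to `(n₁,…,n_{j-1}, n_j+1, 1, n_{j+1}+1, …, n_r)`;
for `j = r` it maps `(n₁,…,n_r)` to `(n₁,…,n_{r-1}, n_r+1, 1)`. -/
def psi : ℕ → List ℤ → List ℤ
  | 0, l => l
  | 1, [] => []
  | 1, [a] => [a + 1, 1]
  | 1, a :: b :: t => (a + 1) :: 1 :: (b + 1) :: t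
  | _ + 2, [] => []
  | j + 2, a :: t => a :: psi (j + 1) t

/-- `ReachesIn s a b` : `b` is obtained from `a` by a sequence of `s` strict blowups. -/
inductive ReachesIn : ℕ → List ℤ → List ℤ → Prop
  | refl (l : List ℤ) : ReachesIn 0 l l
  | step {s : ℕ} {a b : List ℤ} (j : ℕ) (hj : 1 ≤ j) (hj' : j ≤ b.length) :
      ReachesIn s a b → ReachesIn (s + 1) a (psi j b)

/-- `uTuple l = (1,2,…,2,1)` of length `l ≥ 2`; `uTuple 1 = (0)`. -/
def uTuple (l : ℕ) : List ℤ :=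
  if l ≤ 1 then [0] else 1 :: (List.replicate (l - 2) 2 ++ [1])

/-- Height: the minimal number of strict blowups needed to reach `n` from some `uTuple l`. -/
noncomputable def hgt (n : List ℤ) : ℕ :=
  sInf {s | ∃ l : ℕ, 1 ≤ l ∧ ReachesIn s (uTuple l) n}

/-- Derived tuple ("new framings after handle slides"): `n'_k = n_k` and
`n'_i = n_i + n'_{i+1} - 2`. -/
def derived : List ℤ → List ℤ
  | [] => []
  | [a] => [a]
  | a :: b :: t => (a + (derived (b :: t)).headI - 2) :: derived (b :: t)

/-- Strict blowdown at the `(j+1)`-st term (the left inverse of `psi j`): it deletes the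
entry at the `(j+1)`-st position and subtracts 1 from each adjacent incremented entry. -/
def bd : ℕ → List ℤ → List ℤ
  | 0, l => l
  | 1, [] => []
  | 1, [a] => [a]
  | 1, [a, _] => [a - 1]
  | 1, a :: _ :: c :: t => (a - 1) :: (c - 1) :: t
  | _ + 2, [] => []
  | j + 2, a :: t => a :: bd (j + 1) t

/-- One strict blowdown at the leftmost possible `1` (an entry `1` not in the first
position); if there is none, do nothing. -/
def leftmostOneStep (l : List ℤ) : List ℤ :=
  match (l.drop 1).findIdx? (fun x => x == 1) with
  | some i => bd (i + 1) l
  | none => l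

/-!
Write `excess n = |n| - 2(k - 1)`. Every `u_l` has excess `0`, and a strict blowup raises the
excess by at most one (by one at an interior position, by zero at the end), so
`hgt n ≥ excess n`. Conversely, let `n ∈ Z_k` be positive with `k ≥ 2`. If some interior
entry equals `1`, its neighbours are at least `2` and blowing it down gives a positive tuple in
`Z_{k-1}` of excess one less, because `a + 1 - 1/(1 - 1/(w + 1)) = a - 1/w`. If no interior
entry is `1`, then `[n₂, …, n_k] ≥ 1` with equality only for `(2, …, 2, 1)`, and `n₁ ≥ 1`
together with `n₁ = 1/[n₂, …, n_k]` forces `n = u_k`, of excess `0`.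
-/

def excess (l : List ℤ) : ℤ := l.sum - 2 * ((l.length : ℤ) - 1)

lemma excess_uTuple (l : ℕ) : excess (uTuple l) = 0 := by
  unfold excess uTuple
  split_ifs with h
  · simp
  · simp only [List.sum_cons, List.sum_append, List.sum_replicate, Int.nsmul_eq_mul,
      List.sum_nil, add_zero, List.length_cons, List.length_append, List.length_replicate,
      List.length_nil, zero_add, Nat.cast_add, Nat.cast_one, add_sub_cancel_right]
    omega

lemma excess_psi_le : ∀ {j : ℕ} {l : List ℤ}, 1 ≤ j → j ≤ l.length →
    excess (psi j l) ≤ excess l + 1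
  | 1, [a], _, _ => by simp [psi, excess]
  | 1, a :: b :: t, _, _ => by
    simp only [excess, psi, List.sum_cons, List.length_cons]
    push_cast
    omega
  | j + 2, a :: t, _, hj => by
    have ih := excess_psi_le (j := j + 1) (l := t) (by omega) (by simpa using hj)
    simp only [excess, psi, List.sum_cons, List.length_cons] at ih ⊢
    push_cast at ih ⊢
    omega

lemma ReachesIn.excess_le {s : ℕ} {a b : List ℤ} (h : ReachesIn s a b) :
    excess b ≤ excess a + s := by
  induction h with
  | refl => simp
  | step j hj hj' _ ih =>
    have := excess_psi_le hj hj'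
    push_cast
    omega

lemma psi_append (q : List ℤ) (a b : ℤ) (s : List ℤ) :
    psi (q.length + 1) (q ++ a :: b :: s) = q ++ (a + 1) :: 1 :: (b + 1) :: s := by
  induction q with
  | nil => simp [psi]
  | cons x q ih => simp [psi, ih]

lemma excess_blowup (q : List ℤ) (a b : ℤ) (s : List ℤ) :
    excess (q ++ (a + 1) :: 1 :: (b + 1) :: s) = excess (q ++ a :: b :: s) + 1 := by
  simp only [excess, List.sum_append, List.sum_cons, List.length_append, List.length_cons]
  push_cast
  ring

lemma hjcf_cons (a : ℤ) (l : List ℤ) : hjcf (a :: l) = a - (hjcf l)⁻¹ := rfl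

lemma hjcf_append_congr {r₁ r₂ : List ℤ} (h : hjcf r₁ = hjcf r₂) (q : List ℤ) :
    hjcf (q ++ r₁) = hjcf (q ++ r₂) := by
  induction q with
  | nil => exact h
  | cons x q ih => simp only [List.cons_append, hjcf_cons, ih]

lemma hjcf_blowup (a b : ℤ) (s : List ℤ) (hw : hjcf (b :: s) ≠ 0)
    (hw' : hjcf (b :: s) + 1 ≠ 0) :
    hjcf ((a + 1) :: 1 :: (b + 1) :: s) = hjcf (a :: b :: s) := by
  have hcons : hjcf ((b + 1) :: s) = hjcf (b :: s) + 1 := by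
    simp only [hjcf_cons]; push_cast; ring
  rw [hjcf_cons _ (1 :: _), hjcf_cons 1, hcons, hjcf_cons a]
  generalize hjcf (b :: s) = w at *
  have : 1 - (w + 1)⁻¹ = w / (w + 1) := by field_simp; ring
  push_cast
  rw [this, inv_div]
  field_simp
  ring

lemma Admissible.hjcf_drop_nonneg {n : List ℤ} (hadm : Admissible n) (hcf : hjcf n = 0)
    (j : ℕ) : 0 ≤ hjcf (n.drop j) := by
  rcases Nat.eq_zero_or_pos j with rfl | hj
  · simp [hcf]
  rcases lt_or_ge j n.length with hjn | hjn
  · exact (hadm j hj hjn).le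
  · simp [List.drop_eq_nil_of_le hjn, hjcf]

def IsPositiveInZ (n : List ℤ) : Prop := (∀ x ∈ n, 0 < x) ∧ Admissible n ∧ hjcf n = 0

lemma IsPositiveInZ.of_blowup {q : List ℤ} {a b : ℤ} {s : List ℤ}
    (h : IsPositiveInZ (q ++ (a + 1) :: 1 :: (b + 1) :: s)) :
    IsPositiveInZ (q ++ a :: b :: s) := by
  set n := q ++ (a + 1) :: 1 :: (b + 1) :: s
  obtain ⟨hpos, hadm, hcf⟩ := h
  have hnlen : n.length = q.length + 3 + s.length := by simp [n]; omega
  have hdrop (i : ℕ) : n.drop (q.length + i) = ((a + 1) :: 1 :: (b + 1) :: s).drop i :=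
    List.drop_length_add_append i
  set w := hjcf (b :: s)
  have hw1 : 0 < w + 1 := by
    have := hadm (q.length + 2) (by omega) (by omega)
    rwa [hdrop 2, List.drop_succ_cons, List.drop_succ_cons, List.drop_zero, hjcf_cons,
      Int.cast_add, Int.cast_one, add_sub_right_comm] at this
  have hw : 0 < w := by
    have := hadm (q.length + 1) (by omega) (by omega)
    rw [hdrop 1, List.drop_succ_cons, List.drop_zero, hjcf_cons, Int.cast_one, sub_pos,
      show hjcf ((b + 1) :: s) = w + 1 by simp only [w, hjcf_cons]; push_cast; ring,
      inv_lt_one₀ hw1] at this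
    linarith
  have hblowup := hjcf_blowup a b s hw.ne' (by linarith)
  have ha : 0 < a := by
    have := hadm.hjcf_drop_nonneg hcf q.length
    rw [← add_zero q.length, hdrop 0, List.drop_zero, hblowup, hjcf_cons] at this
    have : (0 : ℚ) < a := by linarith [inv_pos.mpr hw]
    exact_mod_cast this
  have hb : 0 < b := by
    have := hadm.hjcf_drop_nonneg hcf (q.length + 3)
    rw [hdrop 3, List.drop_succ_cons, List.drop_succ_cons, List.drop_succ_cons,
      List.drop_zero] at this
    have : w ≤ b := by simp only [w, hjcf_cons]; linarith [inv_nonneg.mpr this]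
    have : (0 : ℚ) < b := by linarith
    exact_mod_cast this
  refine ⟨?_, ?_, by rw [← hjcf_append_congr hblowup q]; exact hcf⟩
  · intro x hx
    simp only [List.mem_append, List.mem_cons] at hx
    rcases hx with hx | rfl | rfl | hx
    · exact hpos x (by simp [n, hx])
    · exact ha
    · exact hb
    · exact hpos x (by simp [n, hx])
  · intro j hj hjlen
    simp only [List.length_append, List.length_cons] at hjlen
    rcases le_or_gt j q.length with hjq | hjq
    · rw [List.drop_append_of_le_length hjq, ← hjcf_append_congr hblowup,
        ← List.drop_append_of_le_length hjq]
      exact hadm j hj (by omega)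
    obtain ⟨i, rfl⟩ : ∃ i, j = q.length + (i + 1) := ⟨j - q.length - 1, by omega⟩
    rw [List.drop_length_add_append, List.drop_succ_cons]
    rcases i with _ | i
    · exact hw
    · have := hadm (q.length + (i + 3)) (by omega) (by omega)
      rwa [hdrop, List.drop_succ_cons, List.drop_succ_cons, List.drop_succ_cons] at this

lemma one_le_hjcf_append_singleton {t : List ℤ} {c : ℤ} (ht : ∀ x ∈ t, 2 ≤ x) (hc : 1 ≤ c) :
    1 ≤ hjcf (t ++ [c]) ∧ (hjcf (t ++ [c]) = 1 → t = List.replicate t.length 2 ∧ c = 1) := by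
  induction t with
  | nil =>
    simp only [List.nil_append, hjcf, inv_zero, sub_zero, List.length_nil, List.replicate_zero,
      true_and]
    exact ⟨by exact_mod_cast hc, fun h => by exact_mod_cast h⟩
  | cons x t ih =>
    obtain ⟨hv, hv_eq⟩ := ih fun y hy => ht y (List.mem_cons_of_mem x hy)
    have hx : (2 : ℚ) ≤ x := by exact_mod_cast ht x List.mem_cons_self
    have hinv : (hjcf (t ++ [c]))⁻¹ ≤ 1 := inv_le_one_of_one_le₀ hv
    rw [List.cons_append, hjcf_cons]
    refine ⟨by linarith, fun h => ?_⟩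
    have hx2 : x = 2 := by
      have : (x : ℚ) = 2 := by linarith
      exact_mod_cast this
    have hv1 : hjcf (t ++ [c]) = 1 := by
      rw [hx2, Int.cast_ofNat] at h
      exact inv_eq_one.mp (by linarith)
    obtain ⟨hrep, rfl⟩ := hv_eq hv1
    refine ⟨?_, rfl⟩
    conv_lhs => rw [hx2, hrep]
    simp [List.replicate_succ]

lemma eq_uTuple_of_forall_ne_one {a : ℤ} {t : List ℤ} (ht : t ≠ [])
    (hpos : ∀ x ∈ a :: t, 0 < x) (hne : ∀ x ∈ t.dropLast, x ≠ 1) (hcf : hjcf (a :: t) = 0) :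
    a :: t = uTuple (t.length + 1) := by
  have hsplit := List.dropLast_append_getLast ht
  have hge : ∀ x ∈ t.dropLast, 2 ≤ x := fun x hx => by
    have := hpos x (List.mem_cons_of_mem a (List.mem_of_mem_dropLast hx))
    have := hne x hx
    omega
  have hc : 1 ≤ t.getLast ht := hpos _ (List.mem_cons_of_mem a (List.getLast_mem ht))
  obtain ⟨hv, hv_eq⟩ := one_le_hjcf_append_singleton hge hc
  rw [hsplit] at hv hv_eq
  have ha : (1 : ℚ) ≤ a := by exact_mod_cast hpos a List.mem_cons_self
  have ha_inv : (a : ℚ) = (hjcf t)⁻¹ := by rw [hjcf_cons] at hcf; linarith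
  have hinv : (hjcf t)⁻¹ ≤ 1 := inv_le_one_of_one_le₀ hv
  have hv1 : hjcf t = 1 := inv_eq_one.mp (by linarith)
  have ha1 : a = 1 := by
    have : (a : ℚ) = 1 := by rw [ha_inv, hv1, inv_one]
    exact_mod_cast this
  obtain ⟨hrep, hlast⟩ := hv_eq hv1
  have hlen : t.length = t.dropLast.length + 1 := by
    have := List.length_pos_iff.mpr ht
    simp only [List.length_dropLast]
    omega
  rw [uTuple, hlen, if_neg (by omega), ha1,
    show t.dropLast.length + 1 + 1 - 2 = t.dropLast.length by omega]
  conv_lhs => rw [← hsplit, hrep, hlast]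

lemma forall_ne_one_or_eq_blowup (a : ℤ) (t : List ℤ) :
    (∀ x ∈ t.dropLast, x ≠ 1) ∨ ∃ q b c s, a :: t = q ++ (b + 1) :: 1 :: (c + 1) :: s := by
  induction t generalizing a with
  | nil => simp
  | cons x t ih =>
    rcases t with _ | ⟨y, t⟩
    · simp
    by_cases hx : x = 1
    · exact Or.inr ⟨[], a - 1, y - 1, t, by simp [hx]⟩
    rcases ih x with h | ⟨q, b, c, s, h⟩
    · left
      intro z hz
      rw [List.dropLast_cons_of_ne_nil (List.cons_ne_nil y t), List.mem_cons] at hz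
      rcases hz with rfl | hz
      · exact hx
      · exact h z hz
    · exact Or.inr ⟨a :: q, b, c, s, by rw [h]; rfl⟩

lemma IsPositiveInZ.exists_reachesIn_uTuple {n : List ℤ} (h : IsPositiveInZ n)
    (hlen : 2 ≤ n.length) : ∃ s l, 1 ≤ l ∧ ReachesIn s (uTuple l) n ∧ (s : ℤ) = excess n := by
  induction hk : n.length using Nat.strong_induction_on generalizing n with
  | _ k ih =>
    obtain ⟨a, t, rfl⟩ := List.exists_cons_of_length_pos (by omega : 0 < n.length)
    rcases forall_ne_one_or_eq_blowup a t with hne | ⟨q, b, c, s, hn⟩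
    · have ht : t ≠ [] := by rintro rfl; simp at hlen
      have hu := eq_uTuple_of_forall_ne_one ht h.1 hne h.2.2
      exact ⟨0, t.length + 1, by omega, hu ▸ .refl _, by rw [hu, excess_uTuple]; rfl⟩
    · rw [hn] at h hk ⊢
      simp only [List.length_append, List.length_cons] at hk
      obtain ⟨m, l, hl, hr, hm⟩ := ih _ (by simp only [List.length_append, List.length_cons]; omega)
        h.of_blowup (by simp only [List.length_append, List.length_cons]; omega) rfl
      refine ⟨m + 1, l, hl, ?_, by rw [excess_blowup]; push_cast; omega⟩
      rw [← psi_append]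
      exact hr.step _ (by omega) (by simp)

/-- For a positive tuple `n ∈ Z_k` with `k ≥ 2`, `hgt n = |n| - 2(k-1)`. -/
theorem hgt_eq_sum_sub (n : List ℤ) (hlen : 2 ≤ n.length)
    (hpos : ∀ x ∈ n, 0 < x) (hadm : Admissible n) (hcf : hjcf n = 0) :
    (hgt n : ℤ) = n.sum - 2 * ((n.length : ℤ) - 1) := by
  obtain ⟨s, l, hl, hr, hs⟩ := IsPositiveInZ.exists_reachesIn_uTuple ⟨hpos, hadm, hcf⟩ hlen
  have hmem : s ∈ {s | ∃ l : ℕ, 1 ≤ l ∧ ReachesIn s (uTuple l) n} := ⟨l, hl, hr⟩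
  have hle : hgt n ≤ s := Nat.sInf_le hmem
  obtain ⟨l', -, hr'⟩ := Nat.sInf_mem ⟨s, hmem⟩
  have hge : excess n ≤ hgt n := by simpa [excess_uTuple, hgt] using hr'.excess_le
  change (hgt n : ℤ) = excess n
  omega
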